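/- Let ε ∈ (0,1), p = 1+ε, C_p = (ε/(1+ε))^((1+ε)/2)·((1−ε)/ε)^((1−ε)/2), and define φ: ℝ → ℝ by φ(x) = sign(x)·log(1 + |x| + C_p|x|^p). Then: (1) φ is Lipschitz with Lipschitz constant at most max{1 + p·C_p, p}; (2) for every x ≠ 0, |φ′(x)| ≤ p/|x|; (3) for every γ ∈ (0,1) there exists a constant C (depending on γ and p) such that |φ(x₁) − φ(x₂)| ≤ C·|x₁ − x₂|^γ for all x₁, x₂ ∈ ℝ. -/

import Mathlib

/-!
Write `φ x = sign x * g |x|` with `g t = log (1 + t + C_p t ^ p)`. On `[0, ∞)` the function `g`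
is increasing, vanishes at `0`, and its derivative satisfies `g' ≤ M := max (1 + p C_p) p` and
`g' t ≤ p / t`, hence `g' t ≤ K / (1 + t)` with `K = M + p`. Comparing derivatives gives the two
moduli of continuity `g b - g a ≤ M (b - a)` and `g b - g a ≤ K log (1 + (b - a))` for
`0 ≤ a ≤ b`; both pass to the odd extension `φ` (the second at the cost of a factor `2`), and
`log (1 + d) ≤ d ^ γ / γ` turns the logarithmic modulus into a Hölder one.
-/

/-- The constant `C_p = (ε/(1+ε))^((1+ε)/2) * ((1-ε)/ε)^((1-ε)/2)` for `p = 1+ε`. -/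
noncomputable def catoniConst (ε : ℝ) : ℝ :=
  (ε / (1 + ε)) ^ ((1 + ε) / 2) * ((1 - ε) / ε) ^ ((1 - ε) / 2)

open Real Set

lemma sub_le_sub_of_hasDerivAt_le {D : Set ℝ} (hD : Convex ℝ D) {f g f' g' : ℝ → ℝ}
    (hf : ∀ t ∈ D, HasDerivAt f (f' t) t) (hg : ∀ t ∈ D, HasDerivAt g (g' t) t)
    (hle : ∀ t ∈ D, f' t ≤ g' t) {a b : ℝ} (ha : a ∈ D) (hb : b ∈ D) (hab : a ≤ b) :
    f b - f a ≤ g b - g a := by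
  have hderiv (t) (ht : t ∈ D) : HasDerivAt (fun s => g s - f s) (g' t - f' t) t :=
    (hg t ht).sub (hf t ht)
  have hmono : MonotoneOn (fun s => g s - f s) D :=
    monotoneOn_of_hasDerivWithinAt_nonneg hD
      (fun t ht => (hderiv t ht).continuousAt.continuousWithinAt)
      (fun t ht => (hderiv t (interior_subset ht)).hasDerivWithinAt)
      (fun t ht => sub_nonneg.mpr (hle t (interior_subset ht)))
  linarith [hmono ha hb hab]

lemma abs_sub_le_of_sub_le_of_monotoneOn {g ω : ℝ → ℝ} (hmono : MonotoneOn g (Ici 0))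
    (hg : ∀ a b, 0 ≤ a → a ≤ b → g b - g a ≤ ω (b - a)) {a b : ℝ} (ha : 0 ≤ a)
    (hb : 0 ≤ b) : |g a - g b| ≤ ω |a - b| := by
  rcases le_total a b with hab | hab
  · rw [abs_sub_comm, abs_of_nonneg (sub_nonneg.mpr (hmono ha hb hab)),
      abs_of_nonpos (sub_nonpos.mpr hab), neg_sub]
    exact hg a b ha hab
  · rw [abs_of_nonneg (sub_nonneg.mpr (hmono hb ha hab)), abs_of_nonneg (sub_nonneg.mpr hab)]
    exact hg b a hb hab

lemma log_one_add_add_log_one_add_le {a b : ℝ} (ha : 0 ≤ a) (hb : 0 ≤ b) :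
    log (1 + a) + log (1 + b) ≤ 2 * log (1 + (a + b)) := by
  have hla : log (1 + a) ≤ log (1 + (a + b)) := log_le_log (by linarith) (by linarith)
  have hlb : log (1 + b) ≤ log (1 + (a + b)) := log_le_log (by linarith) (by linarith)
  linarith

lemma log_one_add_le_rpow_div {d γ : ℝ} (hd : 0 ≤ d) (hγ : 0 < γ) (hγ1 : γ ≤ 1) :
    log (1 + d) ≤ d ^ γ / γ := by
  have hpos : 0 < (1 + d) ^ γ := by positivity
  have hsub : (1 + d) ^ γ ≤ 1 + d ^ γ := by
    simpa using rpow_add_le_add_rpow zero_le_one hd hγ.le hγ1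
  rw [le_div_iff₀ hγ, mul_comm, ← log_rpow (by linarith)]
  linarith [log_le_sub_one_of_pos hpos]

noncomputable def oddExt (g : ℝ → ℝ) (x : ℝ) : ℝ := Real.sign x * g |x|

lemma oddExt_of_nonneg {g : ℝ → ℝ} (hg0 : g 0 = 0) {x : ℝ} (hx : 0 ≤ x) :
    oddExt g x = g x := by
  rcases hx.eq_or_lt with rfl | hx
  · simp [oddExt, hg0]
  · rw [oddExt, sign_of_pos hx, abs_of_pos hx, one_mul]

lemma oddExt_of_nonpos {g : ℝ → ℝ} (hg0 : g 0 = 0) {x : ℝ} (hx : x ≤ 0) :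
    oddExt g x = -g (-x) := by
  rcases hx.eq_or_lt with rfl | hx
  · simp [oddExt, hg0]
  · rw [oddExt, sign_of_neg hx, abs_of_neg hx, neg_one_mul]

/-- For `y ≤ 0 ≤ x` the increment is split at `0`, and `hω` recombines the two pieces. -/
lemma abs_oddExt_sub_le {g ω : ℝ → ℝ} {K : ℝ} (hg0 : g 0 = 0)
    (hg : ∀ a b, 0 ≤ a → 0 ≤ b → |g a - g b| ≤ ω |a - b|)
    (hω : ∀ a b, 0 ≤ a → 0 ≤ b → ω a + ω b ≤ K * ω (a + b)) (x y : ℝ) :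
    |oddExt g x - oddExt g y| ≤ K * ω |x - y| := by
  wlog hyx : y ≤ x generalizing x y
  · rw [abs_sub_comm, abs_sub_comm x]
    exact this y x (le_of_not_ge hyx)
  have hω0 : 0 ≤ ω 0 := by simpa using hg 0 0 le_rfl le_rfl
  have hωK (d) (hd : 0 ≤ d) : ω d ≤ K * ω d := by
    have := hω d 0 hd le_rfl
    rw [add_zero] at this
    linarith
  rcases le_total 0 y with hy | hy
  · rw [oddExt_of_nonneg hg0 (hy.trans hyx), oddExt_of_nonneg hg0 hy]
    exact (hg x y (hy.trans hyx) hy).trans (hωK _ (abs_nonneg _))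
  rcases le_total x 0 with hx | hx
  · have h := hg (-y) (-x) (neg_nonneg.mpr hy) (neg_nonneg.mpr hx)
    rw [neg_sub_neg] at h
    rw [oddExt_of_nonpos hg0 hx, oddExt_of_nonpos hg0 hy, neg_sub_neg]
    exact h.trans (hωK _ (abs_nonneg _))
  · rw [oddExt_of_nonneg hg0 hx, oddExt_of_nonpos hg0 hy, sub_neg_eq_add,
      abs_of_nonneg (sub_nonneg.mpr hyx)]
    have hx0 := hg x 0 hx le_rfl
    have hy0 := hg (-y) 0 (neg_nonneg.mpr hy) le_rfl
    rw [hg0, sub_zero, sub_zero, abs_of_nonneg hx] at hx0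
    rw [hg0, sub_zero, sub_zero, abs_of_nonneg (neg_nonneg.mpr hy)] at hy0
    calc |g x + g (-y)| ≤ |g x| + |g (-y)| := abs_add_le _ _
      _ ≤ ω x + ω (-y) := add_le_add hx0 hy0
      _ ≤ K * ω (x + -y) := hω x (-y) hx (neg_nonneg.mpr hy)
      _ = K * ω (x - y) := by rw [sub_eq_add_neg]

lemma hasDerivAt_oddExt {g : ℝ → ℝ} {g' x : ℝ} (hx : x ≠ 0) (hg : HasDerivAt g g' |x|) :
    HasDerivAt (oddExt g) g' x := by
  rcases hx.lt_or_gt with hx | hx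
  · have heq : (fun t => -g (-t)) =ᶠ[nhds x] oddExt g := by
      filter_upwards [Iio_mem_nhds hx] with t ht
      rw [oddExt, sign_of_neg ht, abs_of_neg ht, neg_one_mul]
    rw [abs_of_neg hx] at hg
    simpa using ((hg.comp x (hasDerivAt_neg x)).neg).congr_of_eventuallyEq heq.symm
  · have heq : g =ᶠ[nhds x] oddExt g := by
      filter_upwards [Ioi_mem_nhds hx] with t ht
      rw [oddExt, sign_of_pos ht, abs_of_pos ht, one_mul]
    rw [abs_of_pos hx] at hg
    exact hg.congr_of_eventuallyEq heq.symm

lemma catoniConst_nonneg {ε : ℝ} (hε : ε ∈ Ioo (0 : ℝ) 1) : 0 ≤ catoniConst ε := by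
  obtain ⟨hε0, hε1⟩ := hε
  unfold catoniConst
  have h1 : 0 ≤ ε / (1 + ε) := by positivity
  have h2 : 0 ≤ (1 - ε) / ε := div_nonneg (by linarith) hε0.le
  positivity

noncomputable def catoniLog (c p t : ℝ) : ℝ := log (1 + t + c * t ^ p)

noncomputable def catoniLogDeriv (c p t : ℝ) : ℝ :=
  (1 + c * (p * t ^ (p - 1))) / (1 + t + c * t ^ p)

section

variable {c p t : ℝ}

lemma catoniLog_zero (hp : p ≠ 0) : catoniLog c p 0 = 0 := by
  simp [catoniLog, zero_rpow hp]

lemma one_add_add_mul_rpow_pos (hc : 0 ≤ c) (ht : 0 ≤ t) : 0 < 1 + t + c * t ^ p := by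
  have := rpow_nonneg ht p
  positivity

lemma hasDerivAt_catoniLog (hc : 0 ≤ c) (hp : 1 ≤ p) (ht : 0 ≤ t) :
    HasDerivAt (catoniLog c p) (catoniLogDeriv c p t) t :=
  ((((hasDerivAt_id t).const_add 1).add
    ((hasDerivAt_rpow_const (Or.inr hp)).const_mul c)).log
    (one_add_add_mul_rpow_pos hc ht).ne')

lemma catoniLogDeriv_nonneg (hc : 0 ≤ c) (hp : 1 ≤ p) (ht : 0 ≤ t) :
    0 ≤ catoniLogDeriv c p t := by
  have := rpow_nonneg ht (p - 1)
  have : 0 ≤ p := by linarith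
  exact div_nonneg (by positivity) (one_add_add_mul_rpow_pos hc ht).le

lemma catoniLogDeriv_le_max (hc : 0 ≤ c) (hp : 1 ≤ p) (ht : 0 ≤ t) :
    catoniLogDeriv c p t ≤ max (1 + p * c) p := by
  rw [catoniLogDeriv, div_le_iff₀ (one_add_add_mul_rpow_pos hc ht)]
  have hcp : 0 ≤ c * p := mul_nonneg hc (by linarith)
  rcases le_total t 1 with ht1 | ht1
  · have h1 : t ^ (p - 1) ≤ 1 := rpow_le_one ht ht1 (by linarith)
    have h2 := rpow_nonneg ht p
    have h3 : 1 + p * c ≤ max (1 + p * c) p := le_max_left _ _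
    nlinarith [mul_le_mul_of_nonneg_left h1 hcp, mul_nonneg hc h2]
  · have h1 : t ^ (p - 1) ≤ t ^ p := rpow_le_rpow_of_exponent_le ht1 (by linarith)
    have h2 : p ≤ max (1 + p * c) p := le_max_right _ _
    have h3 := rpow_nonneg ht p
    nlinarith [mul_le_mul_of_nonneg_left h1 hcp, mul_nonneg hc h3]

lemma catoniLogDeriv_le_div (hc : 0 ≤ c) (hp : 1 ≤ p) (ht : 0 < t) :
    catoniLogDeriv c p t ≤ p / t := by
  rw [catoniLogDeriv, div_le_div_iff₀ (one_add_add_mul_rpow_pos hc ht.le) ht]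
  have key : (1 + c * (p * t ^ (p - 1))) * t = t + p * (c * t ^ p) := by
    rw [rpow_sub_one ht.ne']
    field_simp
  have h := mul_nonneg hc (rpow_nonneg ht.le p)
  nlinarith [mul_nonneg (sub_nonneg.mpr hp) ht.le]

lemma catoniLogDeriv_le_div_one_add (hc : 0 ≤ c) (hp : 1 ≤ p) (ht : 0 ≤ t) :
    catoniLogDeriv c p t ≤ (max (1 + p * c) p + p) / (1 + t) := by
  rw [le_div_iff₀ (by linarith)]
  have h1 := catoniLogDeriv_le_max hc hp ht
  rcases ht.eq_or_lt with rfl | ht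
  · linarith
  have h2 := (le_div_iff₀ ht).mp (catoniLogDeriv_le_div hc hp ht)
  linarith

lemma catoniLog_monotoneOn (hc : 0 ≤ c) (hp : 1 ≤ p) : MonotoneOn (catoniLog c p) (Ici 0) :=
  monotoneOn_of_hasDerivWithinAt_nonneg (convex_Ici 0)
    (fun _ ht => (hasDerivAt_catoniLog hc hp ht).continuousAt.continuousWithinAt)
    (fun t ht => (hasDerivAt_catoniLog hc hp (interior_subset ht : 0 ≤ t)).hasDerivWithinAt)
    (fun t ht => catoniLogDeriv_nonneg hc hp (interior_subset ht : 0 ≤ t))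

lemma catoniLog_sub_le_mul (hc : 0 ≤ c) (hp : 1 ≤ p) {a b : ℝ} (ha : 0 ≤ a)
    (hab : a ≤ b) : catoniLog c p b - catoniLog c p a ≤ max (1 + p * c) p * (b - a) := by
  rw [mul_sub]
  exact sub_le_sub_of_hasDerivAt_le (convex_Ici 0) (fun _ ht => hasDerivAt_catoniLog hc hp ht)
    (fun t _ => (hasDerivAt_id t).const_mul _)
    (fun _ ht => by simpa using catoniLogDeriv_le_max hc hp ht) ha (ha.trans hab) hab

lemma catoniLog_sub_le_log (hc : 0 ≤ c) (hp : 1 ≤ p) {a b : ℝ} (ha : 0 ≤ a)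
    (hab : a ≤ b) :
    catoniLog c p b - catoniLog c p a ≤ (max (1 + p * c) p + p) * log (1 + (b - a)) := by
  set K := max (1 + p * c) p + p
  have hK : 0 ≤ K := by have := le_max_right (1 + p * c) p; linarith
  have hlog : ∀ t ∈ Ici (0 : ℝ),
      HasDerivAt (fun s => K * log (1 + s)) (K * (1 / (1 + t))) t :=
    fun t ht => (((hasDerivAt_id t).const_add 1).log (by simp at ht ⊢; linarith)).const_mul K
  have h := sub_le_sub_of_hasDerivAt_le (convex_Ici 0)
    (fun _ ht => hasDerivAt_catoniLog hc hp ht) hlog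
    (fun _ ht => by simpa [div_eq_mul_inv] using catoniLogDeriv_le_div_one_add hc hp ht)
    ha (ha.trans hab) hab
  refine h.trans ?_
  rw [← mul_sub, ← log_div (by linarith) (by linarith)]
  gcongr
  · exact div_pos (by linarith) (by linarith)
  · rw [div_le_iff₀ (by linarith)]; nlinarith

lemma abs_catoniLog_sub_le_mul (hc : 0 ≤ c) (hp : 1 ≤ p) {a b : ℝ} (ha : 0 ≤ a)
    (hb : 0 ≤ b) : |catoniLog c p a - catoniLog c p b| ≤ max (1 + p * c) p * |a - b| :=
  abs_sub_le_of_sub_le_of_monotoneOn (ω := fun d => max (1 + p * c) p * d)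
    (catoniLog_monotoneOn hc hp) (fun _ _ ha hab => catoniLog_sub_le_mul hc hp ha hab) ha hb

lemma abs_catoniLog_sub_le_log (hc : 0 ≤ c) (hp : 1 ≤ p) {a b : ℝ} (ha : 0 ≤ a)
    (hb : 0 ≤ b) :
    |catoniLog c p a - catoniLog c p b| ≤ (max (1 + p * c) p + p) * log (1 + |a - b|) :=
  abs_sub_le_of_sub_le_of_monotoneOn (ω := fun d => (max (1 + p * c) p + p) * log (1 + d))
    (catoniLog_monotoneOn hc hp) (fun _ _ ha hab => catoniLog_sub_le_log hc hp ha hab) ha hb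

end

/-- For `φ(x) = sign(x) log(1 + |x| + C_p |x|^p)`:
(1) `φ` is Lipschitz with constant at most `max (1 + p C_p) p`;
(2) `|φ'(x)| ≤ p / |x|` for `x ≠ 0`;
(3) for every `γ ∈ (0,1)` there is a constant `C` with
`|φ x₁ - φ x₂| ≤ C |x₁ - x₂|^γ` for all `x₁, x₂`. -/
theorem stmt10 (ε : ℝ) (hε : ε ∈ Set.Ioo (0 : ℝ) 1)
    (p : ℝ) (hp : p = 1 + ε)
    (φ : ℝ → ℝ)
    (hφdef : ∀ x, φ x = Real.sign x * Real.log (1 + |x| + catoniConst ε * |x| ^ p)) :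
    (∀ x y, |φ x - φ y| ≤ max (1 + p * catoniConst ε) p * |x - y|) ∧
    (∀ x : ℝ, x ≠ 0 → |deriv φ x| ≤ p / |x|) ∧
    (∀ γ ∈ Set.Ioo (0 : ℝ) 1, ∃ C : ℝ,
      ∀ x₁ x₂ : ℝ, |φ x₁ - φ x₂| ≤ C * |x₁ - x₂| ^ γ) := by
  set c := catoniConst ε
  have hc : 0 ≤ c := catoniConst_nonneg hε
  have hp1 : 1 ≤ p := by linarith [hε.1]
  obtain rfl : φ = oddExt (catoniLog c p) := funext hφdef
  have hg0 : catoniLog c p 0 = 0 := catoniLog_zero (by linarith)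
  set K := max (1 + p * c) p + p
  have hK : 0 ≤ K := by linarith [le_max_right (1 + p * c) p]
  refine ⟨fun x y => ?_, fun x hx => ?_, fun γ hγ => ⟨2 * K / γ, fun x y => ?_⟩⟩
  · simpa using abs_oddExt_sub_le (K := 1) hg0 (fun _ _ => abs_catoniLog_sub_le_mul hc hp1)
      (fun _ _ _ _ => le_of_eq (by ring)) x y
  · rw [(hasDerivAt_oddExt hx (hasDerivAt_catoniLog hc hp1 (abs_nonneg x))).deriv,
      abs_of_nonneg (catoniLogDeriv_nonneg hc hp1 (abs_nonneg x))]
    exact catoniLogDeriv_le_div hc hp1 (abs_pos.mpr hx)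
  · calc |oddExt (catoniLog c p) x - oddExt (catoniLog c p) y|
        ≤ 2 * (K * log (1 + |x - y|)) :=
          abs_oddExt_sub_le (ω := fun d => K * log (1 + d)) hg0
            (fun _ _ => abs_catoniLog_sub_le_log hc hp1)
            (fun a b ha hb => by nlinarith [log_one_add_add_log_one_add_le ha hb]) x y
      _ ≤ 2 * (K * (|x - y| ^ γ / γ)) := by
        gcongr; exact log_one_add_le_rpow_div (abs_nonneg _) hγ.1 hγ.2.le
      _ = 2 * K / γ * |x - y| ^ γ := by ring
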